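/- arXiv:2410.00611 — 2 statements merged into one kernel-verified Lean document; each statement's English description precedes it below -/
import Mathlib

section
/- Let p be a prime, n, m positive integers, and F : 𝔽_p^n → 𝔽_p^m any function. For each β ∈ 𝔽_p^m one has p^{n−m} − sqrt((1 − p^{−m})·Nb_F) ≤ |F⁻¹(β)| ≤ p^{n−m} + sqrt((1 − p^{−m})·Nb_F). Moreover, if some β attains one of these two bounds with equality, then |F⁻¹(α)| = (p^n − |F⁻¹(β)|)/(p^m − 1) for every α ∈ 𝔽_p^m with α ≠ β. -/
/-!
Parseval's identity turns the imbalance into the total squared deviation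
`∑ γ, (|F⁻¹(γ)| - p^(n-m))²` of the fibre sizes from their mean. The deviations sum to zero, so the
deviation at `β` is minus the sum of the `p^m - 1` others, and Cauchy–Schwarz bounds its square
by `(1 - p^(-m))` times the total. Equality in Cauchy–Schwarz forces the other deviations, hence
the other fibre sizes, to be equal.
-/

open Finset

/-- The Walsh transform of `F : 𝔽_p^n → 𝔽_p^m` at `(b, a)`. -/
noncomputable def walsh (p n m : ℕ) [NeZero p] (F : (Fin n → ZMod p) → (Fin m → ZMod p))
    (b : Fin m → ZMod p) (a : Fin n → ZMod p) : ℂ :=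
  ∑ x : Fin n → ZMod p,
    Complex.exp (2 * Real.pi * Complex.I *
      ((((∑ i, b i * F x i) - ∑ i, a i * x i).val : ℤ) : ℂ) / p)

/-- The imbalance `Nb_F = p^{-m} ∑_{b ≠ 0} |W_F(b,0)|²`. -/
noncomputable def imbalance (p n m : ℕ) [NeZero p]
    (F : (Fin n → ZMod p) → (Fin m → ZMod p)) : ℝ :=
  ((p : ℝ) ^ m)⁻¹ *
    ∑ b ∈ univ.filter (fun b : Fin m → ZMod p => b ≠ 0),
      ‖walsh p n m F b 0‖ ^ 2

/-- The size of the preimage set `F⁻¹(β)`. -/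
def fiberCard (p n m : ℕ) [NeZero p] (F : (Fin n → ZMod p) → (Fin m → ZMod p))
    (β : Fin m → ZMod p) : ℕ :=
  (univ.filter fun x => F x = β).card

namespace Finset

variable {ι : Type*} (s : Finset ι) (f : ι → ℝ)

lemma sum_sq_card_mul_sub_sum :
    ∑ i ∈ s, (#s * f i - ∑ j ∈ s, f j) ^ 2
      = #s * (#s * ∑ i ∈ s, f i ^ 2 - (∑ i ∈ s, f i) ^ 2) := by
  simp only [sub_sq, mul_pow, sum_add_distrib, sum_sub_distrib, ← mul_sum, ← sum_mul, sum_const,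
    nsmul_eq_mul]
  ring

lemma card_mul_eq_sum_of_sq_sum_eq (h : (∑ i ∈ s, f i) ^ 2 = #s * ∑ i ∈ s, f i ^ 2) {i : ι}
    (hi : i ∈ s) : #s * f i = ∑ j ∈ s, f j := by
  have hzero := sum_sq_card_mul_sub_sum s f
  rw [← h, sub_self, mul_zero] at hzero
  exact sub_eq_zero.1 <| pow_eq_zero_iff two_ne_zero |>.1 <|
    (sum_eq_zero_iff_of_nonneg fun _ _ => sq_nonneg _).1 hzero i hi

end Finset

section Deviation

variable {ι : Type*} [Fintype ι] (f : ι → ℝ) {c : ℝ} (hc : ∑ i, f i = Fintype.card ι * c) (β : ι)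
include hc

lemma one_sub_inv_card_mul_sum_sq_sub_sq [DecidableEq ι] :
    (1 - (Fintype.card ι : ℝ)⁻¹) * ∑ i, (f i - c) ^ 2 - (f β - c) ^ 2
      = (Fintype.card ι : ℝ)⁻¹ * (#(univ.erase β) * ∑ i ∈ univ.erase β, (f i - c) ^ 2
          - (∑ i ∈ univ.erase β, (f i - c)) ^ 2) := by
  have : Nonempty ι := ⟨β⟩
  have hk : (Fintype.card ι : ℝ) ≠ 0 := by exact_mod_cast Fintype.card_ne_zero
  have hcard : (#(univ.erase β) : ℝ) = Fintype.card ι - 1 := by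
    rw [cast_card_erase_of_mem (mem_univ β), card_univ]
  have hsum : ∑ i ∈ univ.erase β, (f i - c) = -(f β - c) := by
    have htotal : ∑ i, (f i - c) = 0 := by
      rw [sum_sub_distrib, hc, sum_const, card_univ, nsmul_eq_mul, sub_self]
    linarith [sum_erase_add univ (fun i => f i - c) (mem_univ β)]
  have hsum_sq := sum_erase_add univ (fun i => (f i - c) ^ 2) (mem_univ β)
  rw [hcard, hsum, eq_sub_of_add_eq hsum_sq]
  field_simp
  ring

lemma sq_sub_le_one_sub_inv_card_mul_sum_sq :
    (f β - c) ^ 2 ≤ (1 - (Fintype.card ι : ℝ)⁻¹) * ∑ i, (f i - c) ^ 2 := by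
  classical
  rw [← sub_nonneg, one_sub_inv_card_mul_sum_sq_sub_sq f hc β]
  exact mul_nonneg (by positivity) (sub_nonneg.2 sq_sum_le_card_mul_sum_sq)

lemma eq_of_sq_sub_eq_one_sub_inv_card_mul_sum_sq
    (h : (f β - c) ^ 2 = (1 - (Fintype.card ι : ℝ)⁻¹) * ∑ i, (f i - c) ^ 2) {α : ι} (hα : α ≠ β) :
    f α = (∑ i, f i - f β) / (Fintype.card ι - 1) := by
  classical
  have hk : (1 : ℝ) < Fintype.card ι := by exact_mod_cast Fintype.one_lt_card_iff.2 ⟨α, β, hα⟩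
  have hgap := one_sub_inv_card_mul_sum_sq_sub_sq f hc β
  rw [h, sub_self, eq_comm, mul_eq_zero, sub_eq_zero] at hgap
  have hconst := (univ.erase β).card_mul_eq_sum_of_sq_sum_eq _ (hgap.resolve_left (by positivity)).symm
    (mem_erase.2 ⟨hα, mem_univ α⟩)
  rw [sum_sub_distrib, sum_erase_eq_sub (mem_univ β), sum_const, nsmul_eq_mul,
    cast_card_erase_of_mem (mem_univ β), card_univ] at hconst
  rw [eq_div_iff (sub_ne_zero.2 hk.ne')]
  linarith

end Deviation

lemma AddChar.map_sum_eq_prod {ι A M : Type*} [AddCommMonoid A] [CommMonoid M]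
    (ψ : AddChar A M) (s : Finset ι) (f : ι → A) : ψ (∑ i ∈ s, f i) = ∏ i ∈ s, ψ (f i) :=
  map_prod ψ.toMonoidHom (fun i => Multiplicative.ofAdd (f i)) s

lemma sum_stdAddChar_dotProduct {p m : ℕ} [NeZero p] (y : Fin m → ZMod p) :
    ∑ b : Fin m → ZMod p, ZMod.stdAddChar (b ⬝ᵥ y) = if y = 0 then (p : ℂ) ^ m else 0 := by
  classical
  simp only [dotProduct, AddChar.map_sum_eq_prod]
  rw [← Fintype.prod_sum (fun i c => ZMod.stdAddChar (c * y i))]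
  simp only [AddChar.sum_mulShift _ (ZMod.isPrimitive_stdAddChar p), ZMod.card, Nat.cast_ite,
    Nat.cast_zero, Fintype.prod_ite_zero, funext_iff, Pi.zero_apply]
  simp

lemma sum_card_filter_eq_sq {X Y : Type*} [Fintype X] [Fintype Y] [DecidableEq Y] (F : X → Y) :
    ∑ x, #{x' | F x' = F x} = ∑ y, #{x | F x = y} ^ 2 := by
  rw [← sum_fiberwise univ F]
  refine sum_congr rfl fun y _ => ?_
  rw [sum_congr rfl fun x hx => by rw [(mem_filter.1 hx).2], sum_const, smul_eq_mul, sq]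

lemma sum_norm_sq_sum_stdAddChar {X : Type*} [Fintype X] {p m : ℕ} [NeZero p]
    (F : X → Fin m → ZMod p) :
    ∑ b : Fin m → ZMod p, ‖∑ x, ZMod.stdAddChar (b ⬝ᵥ F x)‖ ^ 2
      = (p : ℝ) ^ m * ∑ β, (#{x | F x = β} : ℝ) ^ 2 := by
  classical
  apply Complex.ofReal_injective
  push_cast
  have hexpand : ∀ b : Fin m → ZMod p,
      ((‖∑ x, ZMod.stdAddChar (b ⬝ᵥ F x)‖ : ℂ)) ^ 2
        = ∑ x, ∑ x', ZMod.stdAddChar (b ⬝ᵥ (F x' - F x)) := by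
    intro b
    rw [← Complex.conj_mul', map_sum, sum_mul_sum]
    simp only [← AddChar.map_neg_eq_conj, ← AddChar.map_add_eq_mul, dotProduct_sub,
      neg_add_eq_sub]
  simp only [hexpand]
  rw [sum_comm]
  simp only [sum_comm (γ := Fin m → ZMod p), sum_stdAddChar_dotProduct, sub_eq_zero, sum_ite,
    sum_const_zero, add_zero, sum_const, nsmul_eq_mul, ← sum_mul]
  norm_cast
  rw [sum_card_filter_eq_sq, mul_comm]

lemma walsh_zero (p n m : ℕ) [NeZero p] (F : (Fin n → ZMod p) → (Fin m → ZMod p))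
    (b : Fin m → ZMod p) :
    walsh p n m F b 0 = ∑ x, ZMod.stdAddChar (b ⬝ᵥ F x) := by
  refine sum_congr rfl fun x _ => ?_
  simp only [Pi.zero_apply, zero_mul, sum_const_zero, sub_zero, ZMod.stdAddChar_apply,
    ZMod.toCircle_apply, dotProduct]
  push_cast
  ring_nf

lemma sum_fiberCard (p n m : ℕ) [NeZero p] (F : (Fin n → ZMod p) → (Fin m → ZMod p)) :
    ∑ β, (fiberCard p n m F β : ℝ) = (p : ℝ) ^ n := by
  classical
  have := card_eq_sum_card_fiberwise (f := F) (s := univ) (t := univ) fun x _ => mem_univ (F x)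
  rw [card_univ, Fintype.card_fun, ZMod.card, Fintype.card_fin] at this
  exact_mod_cast this.symm

lemma imbalance_eq_sum_sq (p n m : ℕ) [NeZero p] (F : (Fin n → ZMod p) → (Fin m → ZMod p)) :
    imbalance p n m F = ∑ β, ((fiberCard p n m F β : ℝ) - (p : ℝ) ^ ((n : ℤ) - m)) ^ 2 := by
  have hp : (p : ℝ) ≠ 0 := Nat.cast_ne_zero.2 (NeZero.ne p)
  have hzero : ‖walsh p n m F 0 0‖ = (p : ℝ) ^ n := by
    simp [walsh_zero, ZMod.card]
  rw [imbalance, filter_ne', sum_erase_eq_sub (mem_univ 0), hzero]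
  simp only [walsh_zero, sum_norm_sq_sum_stdAddChar]
  simp only [sub_sq, sum_add_distrib, sum_sub_distrib, ← sum_mul, ← mul_sum, sum_const,
    card_univ, nsmul_eq_mul, sum_fiberCard, Fintype.card_fun, ZMod.card, Fintype.card_fin]
  rw [zpow_sub₀ hp, zpow_natCast, zpow_natCast]
  field_simp
  push_cast [fiberCard]
  ring

theorem fiberCard_bounds_general (p n m : ℕ) [NeZero p]
    (F : (Fin n → ZMod p) → (Fin m → ZMod p)) :
    (∀ β : Fin m → ZMod p,
      (p : ℝ) ^ ((n : ℤ) - (m : ℤ)) - Real.sqrt ((1 - ((p : ℝ) ^ m)⁻¹) * imbalance p n m F)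
        ≤ (fiberCard p n m F β : ℝ) ∧
      (fiberCard p n m F β : ℝ)
        ≤ (p : ℝ) ^ ((n : ℤ) - (m : ℤ)) + Real.sqrt ((1 - ((p : ℝ) ^ m)⁻¹) * imbalance p n m F)) ∧
    (∀ β : Fin m → ZMod p,
      ((fiberCard p n m F β : ℝ)
          = (p : ℝ) ^ ((n : ℤ) - (m : ℤ)) - Real.sqrt ((1 - ((p : ℝ) ^ m)⁻¹) * imbalance p n m F) ∨
       (fiberCard p n m F β : ℝ)
          = (p : ℝ) ^ ((n : ℤ) - (m : ℤ)) + Real.sqrt ((1 - ((p : ℝ) ^ m)⁻¹) * imbalance p n m F)) →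
      ∀ α : Fin m → ZMod p, α ≠ β →
        (fiberCard p n m F α : ℝ)
          = ((p : ℝ) ^ n - (fiberCard p n m F β : ℝ)) / ((p : ℝ) ^ m - 1)) := by
  set N : (Fin m → ZMod p) → ℝ := fun β => fiberCard p n m F β
  set c : ℝ := (p : ℝ) ^ ((n : ℤ) - (m : ℤ)) with hc
  have hcard : (Fintype.card (Fin m → ZMod p) : ℝ) = (p : ℝ) ^ m := by simp [ZMod.card]
  have hmean : ∑ β, N β = Fintype.card (Fin m → ZMod p) * c := by
    rw [sum_fiberCard, hcard, hc, ← zpow_natCast, ← zpow_natCast,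
      ← zpow_add₀ (Nat.cast_ne_zero.2 (NeZero.ne p)), add_sub_cancel]
  have hdev : (1 - ((p : ℝ) ^ m)⁻¹) * imbalance p n m F
      = (1 - (Fintype.card (Fin m → ZMod p) : ℝ)⁻¹) * ∑ β, (N β - c) ^ 2 := by
    rw [imbalance_eq_sum_sq, hcard]
  rw [hdev]
  refine ⟨fun β => ?_, fun β hβ α hα => ?_⟩
  · have := abs_le.1 <| Real.abs_le_sqrt <| sq_sub_le_one_sub_inv_card_mul_sum_sq N hmean β
    constructor <;> linarith
  · have hnonneg := (sq_nonneg _).trans (sq_sub_le_one_sub_inv_card_mul_sum_sq N hmean β)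
    have hextremal : (N β - c) ^ 2
        = (1 - (Fintype.card (Fin m → ZMod p) : ℝ)⁻¹) * ∑ β, (N β - c) ^ 2 := by
      rcases hβ with h | h <;> simp only [N, h, sub_sub_cancel_left, add_sub_cancel_left, neg_sq,
        Real.sq_sqrt hnonneg]
    have := eq_of_sq_sub_eq_one_sub_inv_card_mul_sum_sq N hmean β hextremal hα
    rwa [sum_fiberCard, hcard] at this

theorem fiberCard_bounds (p n m : ℕ) [NeZero p] (hp : p.Prime) (hn : 0 < n) (hm : 0 < m)
    (F : (Fin n → ZMod p) → (Fin m → ZMod p)) :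
    (∀ β : Fin m → ZMod p,
      (p : ℝ) ^ ((n : ℤ) - (m : ℤ)) - Real.sqrt ((1 - ((p : ℝ) ^ m)⁻¹) * imbalance p n m F)
        ≤ (fiberCard p n m F β : ℝ) ∧
      (fiberCard p n m F β : ℝ)
        ≤ (p : ℝ) ^ ((n : ℤ) - (m : ℤ)) + Real.sqrt ((1 - ((p : ℝ) ^ m)⁻¹) * imbalance p n m F)) ∧
    (∀ β : Fin m → ZMod p,
      ((fiberCard p n m F β : ℝ)
          = (p : ℝ) ^ ((n : ℤ) - (m : ℤ)) - Real.sqrt ((1 - ((p : ℝ) ^ m)⁻¹) * imbalance p n m F) ∨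
       (fiberCard p n m F β : ℝ)
          = (p : ℝ) ^ ((n : ℤ) - (m : ℤ)) + Real.sqrt ((1 - ((p : ℝ) ^ m)⁻¹) * imbalance p n m F)) →
      ∀ α : Fin m → ZMod p, α ≠ β →
        (fiberCard p n m F α : ℝ)
          = ((p : ℝ) ^ n - (fiberCard p n m F β : ℝ)) / ((p : ℝ) ^ m - 1)) :=
  fiberCard_bounds_general p n m F
end

section
/- Let p be a prime, n, m positive integers, and F : 𝔽_p^n → 𝔽_p^m a surjective function with Ξ(F) ≠ 0 such that |F⁻¹(0)| = p^{n−m} + sqrt((1 − p^{−m})·Nb_F) or |F⁻¹(0)| = p^{n−m} − sqrt((1 − p^{−m})·Nb_F). Then there exists a nonzero integer W such that: (a) W_F(b,0) = W for all b ∈ 𝔽_p^m with b ≠ 0; (b) p^m divides W; (c) Nb_F = ((p^m − 1)/p^m)·W²; and the preimage sizes are |F⁻¹(0)| = p^{n−m} + ((p^m − 1)/p^m)·W and |F⁻¹(β)| = p^{n−m} − W/p^m for every β ∈ 𝔽_p^m with β ≠ 0. -/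
open Finset

/-- The size of the image set of `F`. -/
def imSize (p n m : ℕ) [NeZero p] (F : (Fin n → ZMod p) → (Fin m → ZMod p)) : ℕ :=
  (univ.image F).card

/-- The imbalance defect
`Ξ(F) = sqrt((|im F| - 1)(|im F|·Nb_F - p^{2n-m}(p^m - |im F|)))/|im F|`. -/
noncomputable def xi (p n m : ℕ) [NeZero p]
    (F : (Fin n → ZMod p) → (Fin m → ZMod p)) : ℝ :=
  Real.sqrt (((imSize p n m F : ℝ) - 1) *
      ((imSize p n m F : ℝ) * imbalance p n m F -
        (p : ℝ) ^ (2 * (n : ℤ) - (m : ℤ)) * ((p : ℝ) ^ m - (imSize p n m F : ℝ)))) /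
    (imSize p n m F : ℝ)

/-! Fourier inversion gives `p^m |F⁻¹(β)| = p^n + ∑_{b ≠ 0} W_F(b,0) ψ(-⟨b,β⟩)`, where
`ψ = ZMod.stdAddChar`. At `β = 0` the hypothesis on `|F⁻¹(0)|` says exactly that
`|∑_{b ≠ 0} W_F(b,0)|² = (p^m - 1) ∑_{b ≠ 0} |W_F(b,0)|²`, the equality case of Cauchy–Schwarz,
so `W_F(b,0)` is a constant `c` for `b ≠ 0`. Inversion at any `β ≠ 0` then gives
`c = p^n - p^m |F⁻¹(β)|`, an integer divisible by `p^m` because `m ≤ n`. For surjective `F` we have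
`Ξ(F) = √((1 - p^{-m}) Nb_F)`, so `Ξ(F) ≠ 0` excludes both `p^m = 1` and `c = 0`. -/

open scoped RealInnerProductSpace

theorem Finset.eq_of_sum_eq_card_smul_of_sum_norm_sq_eq {E ι : Type*} [NormedAddCommGroup E]
    [InnerProductSpace ℝ E] {s : Finset ι} {z : ι → E} {c : E} (hsum : ∑ i ∈ s, z i = #s • c)
    (hnorm : ∑ i ∈ s, ‖z i‖ ^ 2 = #s * ‖c‖ ^ 2) :
    ∀ i ∈ s, z i = c := by
  have hzero : ∑ i ∈ s, ‖z i - c‖ ^ 2 = 0 := by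
    have : ∑ i ∈ s, ‖z i - c‖ ^ 2
        = ∑ i ∈ s, ‖z i‖ ^ 2 - 2 * ⟪∑ i ∈ s, z i, c⟫ + #s * ‖c‖ ^ 2 := by
      simp [norm_sub_sq_real, sum_add_distrib, sum_sub_distrib, mul_sum, sum_inner]
    rw [this, hsum, hnorm, ← Nat.cast_smul_eq_nsmul ℝ, real_inner_smul_left,
      real_inner_self_eq_norm_sq]
    ring
  intro i hi
  have := (sum_eq_zero_iff_of_nonneg fun j _ => sq_nonneg ‖z j - c‖).1 hzero i hi
  rwa [sq_eq_zero_iff, norm_eq_zero, sub_eq_zero] at this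

theorem eq_zpow_sub_add_div_of_pow_mul_eq {a N x : ℝ} {n m : ℕ} (ha : a ≠ 0)
    (h : a ^ m * N = a ^ n + x) : N = a ^ ((n : ℤ) - m) + x / a ^ m := by
  rw [zpow_natCast_sub_natCast₀ ha, ← add_div, ← h, mul_div_cancel_left₀ _ (pow_ne_zero _ ha)]

theorem pow_natCast_pos (p m : ℕ) [NeZero p] : (0 : ℝ) < (p : ℝ) ^ m := by
  have := NeZero.pos p
  positivity

namespace ZMod

theorem le_of_surjective_pi {p n m : ℕ} (hp : 1 < p)
    {F : (Fin n → ZMod p) → (Fin m → ZMod p)} (hF : Function.Surjective F) : m ≤ n := by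
  have : NeZero p := ⟨by omega⟩
  have h := Fintype.card_le_of_surjective F hF
  simp only [Fintype.card_pi, card, prod_const, card_univ, Fintype.card_fin] at h
  exact (Nat.pow_le_pow_iff_right hp).1 h

variable {p m : ℕ} [NeZero p]

theorem sum_stdAddChar_dotProduct (v : Fin m → ZMod p) :
    ∑ b : Fin m → ZMod p, stdAddChar (b ⬝ᵥ v) = if v = 0 then (p : ℂ) ^ m else 0 := by
  let χ : AddChar (Fin m → ZMod p) ℂ :=
    stdAddChar.compAddMonoidHom ((dotProductBilin (ZMod p) (ZMod p)).flip v).toAddMonoidHom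
  have hχ : χ = 0 ↔ v = 0 := by
    refine ⟨fun h => funext fun i => injective_stdAddChar ?_, fun h => ?_⟩
    · simpa [χ, single_dotProduct] using DFunLike.congr_fun h (Pi.single i 1)
    · ext b; simp [χ, h]
  convert χ.sum_eq_ite using 1
  · rfl
  · simp only [hχ, Fintype.card_pi, card, prod_const, card_univ, Fintype.card_fin]
    push_cast
    rfl

theorem card_filter_ne_zero {R : Type*} [Ring R] :
    (#(univ.filter fun b : Fin m → ZMod p => b ≠ 0) : R) = (p : R) ^ m - 1 := by
  rw [filter_ne', card_erase_of_mem (mem_univ 0), card_univ, Nat.cast_sub Fintype.card_pos]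
  simp [card]

theorem sum_stdAddChar_neg_dotProduct_ne_zero {β : Fin m → ZMod p} (hβ : β ≠ 0) :
    ∑ b ∈ univ.filter (fun b : Fin m → ZMod p => b ≠ 0), stdAddChar (-(b ⬝ᵥ β)) = -1 := by
  have h := sum_stdAddChar_dotProduct (-β)
  rw [if_neg (neg_ne_zero.2 hβ), ← sum_filter_add_sum_filter_not univ (· ≠ 0)] at h
  simpa [dotProduct_neg, filter_eq', add_eq_zero_iff_eq_neg] using h

end ZMod

section Walsh

variable {p n m : ℕ} [NeZero p] (F : (Fin n → ZMod p) → (Fin m → ZMod p))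

theorem walsh_zero_right (b : Fin m → ZMod p) :
    walsh p n m F b 0 = ∑ x, ZMod.stdAddChar (b ⬝ᵥ F x) := by
  refine sum_congr rfl fun x _ => ?_
  simp only [Pi.zero_apply, zero_mul, sum_const_zero, sub_zero]
  rw [← ZMod.stdAddChar_coe, Int.cast_natCast, ZMod.natCast_zmod_val]
  rfl

theorem walsh_zero_zero : walsh p n m F 0 0 = (p : ℂ) ^ n := by
  simp [walsh_zero_right, ZMod.card]

theorem sum_walsh_mul_stdAddChar (β : Fin m → ZMod p) :
    ∑ b, walsh p n m F b 0 * ZMod.stdAddChar (-(b ⬝ᵥ β)) = (p : ℂ) ^ m * fiberCard p n m F β := by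
  have hchar (x : Fin n → ZMod p) :
      ∑ b : Fin m → ZMod p, ZMod.stdAddChar (b ⬝ᵥ F x) * ZMod.stdAddChar (-(b ⬝ᵥ β))
        = if F x = β then (p : ℂ) ^ m else 0 := by
    simp_rw [← AddChar.map_add_eq_mul, ← sub_eq_add_neg, ← dotProduct_sub,
      ZMod.sum_stdAddChar_dotProduct, sub_eq_zero]
  simp_rw [walsh_zero_right, sum_mul]
  rw [sum_comm]
  simp_rw [hchar]
  rw [← sum_filter, sum_const, nsmul_eq_mul, mul_comm, fiberCard]

theorem sum_walsh_ne_zero_mul_stdAddChar (β : Fin m → ZMod p) :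
    ∑ b ∈ univ.filter (fun b : Fin m → ZMod p => b ≠ 0),
        walsh p n m F b 0 * ZMod.stdAddChar (-(b ⬝ᵥ β))
      = (p : ℂ) ^ m * fiberCard p n m F β - (p : ℂ) ^ n := by
  rw [← sum_walsh_mul_stdAddChar, ← sum_filter_add_sum_filter_not univ (· ≠ 0)]
  simp [filter_eq', walsh_zero_zero]

theorem sum_walsh_ne_zero :
    ∑ b ∈ univ.filter (fun b : Fin m → ZMod p => b ≠ 0), walsh p n m F b 0
      = (p : ℂ) ^ m * fiberCard p n m F 0 - (p : ℂ) ^ n := by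
  simpa using sum_walsh_ne_zero_mul_stdAddChar F 0

theorem fiberCard_mul_of_walsh_eq_const {c : ℝ} (hc : ∀ b ≠ 0, walsh p n m F b 0 = c)
    {β : Fin m → ZMod p} (hβ : β ≠ 0) :
    (p : ℝ) ^ m * fiberCard p n m F β = (p : ℝ) ^ n - c := by
  have h := sum_walsh_ne_zero_mul_stdAddChar F β
  rw [sum_congr rfl fun b hb => by rw [hc b (mem_filter.1 hb).2], ← mul_sum,
    ZMod.sum_stdAddChar_neg_dotProduct_ne_zero hβ] at h
  exact_mod_cast (by linear_combination -h : (p : ℂ) ^ m * fiberCard p n m F β = (p : ℂ) ^ n - c)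

theorem fiberCard_zero_mul_of_walsh_eq_const {c : ℝ} (hc : ∀ b ≠ 0, walsh p n m F b 0 = c) :
    (p : ℝ) ^ m * fiberCard p n m F 0 = (p : ℝ) ^ n + ((p : ℝ) ^ m - 1) * c := by
  have h := sum_walsh_ne_zero F
  rw [sum_congr rfl fun b hb => by rw [hc b (mem_filter.1 hb).2], sum_const, nsmul_eq_mul,
    ZMod.card_filter_ne_zero (R := ℂ)] at h
  exact_mod_cast (sub_eq_iff_eq_add'.1 h.symm)

theorem imbalance_nonneg : 0 ≤ imbalance p n m F := by
  unfold imbalance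
  positivity

theorem sum_norm_sq_walsh_ne_zero :
    ∑ b ∈ univ.filter (fun b : Fin m → ZMod p => b ≠ 0), ‖walsh p n m F b 0‖ ^ 2
      = (p : ℝ) ^ m * imbalance p n m F := by
  rw [imbalance, mul_inv_cancel_left₀ (pow_natCast_pos p m).ne']

theorem imbalance_of_walsh_eq_const {c : ℝ} (hc : ∀ b ≠ 0, walsh p n m F b 0 = c) :
    imbalance p n m F = ((p : ℝ) ^ m - 1) / (p : ℝ) ^ m * c ^ 2 := by
  rw [imbalance, sum_congr rfl fun b hb => by rw [hc b (mem_filter.1 hb).2], sum_const,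
    nsmul_eq_mul, ZMod.card_filter_ne_zero (R := ℝ), Complex.norm_real, Real.norm_eq_abs, sq_abs]
  ring

theorem xi_of_surjective (hF : Function.Surjective F) :
    xi p n m F = √((1 - ((p : ℝ) ^ m)⁻¹) * imbalance p n m F) := by
  have him : (imSize p n m F : ℝ) = (p : ℝ) ^ m := by
    simp [imSize, image_univ_of_surjective hF, ZMod.card]
  have hq := pow_natCast_pos p m
  rw [xi, him, sub_self, mul_zero, sub_zero, show (1 - ((p : ℝ) ^ m)⁻¹) * imbalance p n m F
      = ((p : ℝ) ^ m - 1) * ((p : ℝ) ^ m * imbalance p n m F) / ((p : ℝ) ^ m) ^ 2 by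
    field_simp, Real.sqrt_div' _ (sq_nonneg _), Real.sqrt_sq hq.le]

theorem one_lt_pow_and_imbalance_pos_of_xi_ne_zero (hF : Function.Surjective F)
    (hxi : xi p n m F ≠ 0) : 1 < (p : ℝ) ^ m ∧ 0 < imbalance p n m F := by
  rw [xi_of_surjective F hF, Ne, Real.sqrt_eq_zero', not_le] at hxi
  have hq := pos_of_mul_pos_left hxi (imbalance_nonneg F)
  rw [sub_pos, inv_lt_one₀ (pow_natCast_pos p m)] at hq
  exact ⟨hq, pos_of_mul_pos_right hxi (by linarith [inv_lt_one_of_one_lt₀ hq])⟩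

theorem walsh_eq_of_sq_sub_fiberCard_zero (hq : 1 < (p : ℝ) ^ m)
    (h : ((fiberCard p n m F 0 : ℝ) - (p : ℝ) ^ ((n : ℤ) - m)) ^ 2
      = (1 - ((p : ℝ) ^ m)⁻¹) * imbalance p n m F) :
    ∀ b ≠ 0, walsh p n m F b 0
      = (((p : ℝ) ^ m * fiberCard p n m F 0 - (p : ℝ) ^ n) / ((p : ℝ) ^ m - 1) : ℝ) := by
  set c : ℝ := ((p : ℝ) ^ m * fiberCard p n m F 0 - (p : ℝ) ^ n) / ((p : ℝ) ^ m - 1) with hc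
  have hK : (p : ℝ) ^ m - 1 ≠ 0 := sub_ne_zero.2 hq.ne'
  have hsum : ∑ b ∈ univ.filter (fun b : Fin m → ZMod p => b ≠ 0), walsh p n m F b 0
      = #(univ.filter fun b : Fin m → ZMod p => b ≠ 0) • (c : ℂ) := by
    rw [sum_walsh_ne_zero, nsmul_eq_mul, ZMod.card_filter_ne_zero (R := ℂ)]
    have hcK : ((p : ℝ) ^ m - 1) * c = (p : ℝ) ^ m * fiberCard p n m F 0 - (p : ℝ) ^ n :=
      mul_div_cancel₀ _ hK
    simpa using congrArg Complex.ofReal hcK.symm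
  have hnorm : ∑ b ∈ univ.filter (fun b : Fin m → ZMod p => b ≠ 0), ‖walsh p n m F b 0‖ ^ 2
      = #(univ.filter fun b : Fin m → ZMod p => b ≠ 0) * ‖(c : ℂ)‖ ^ 2 := by
    have hpow : (p : ℝ) ^ m * (p : ℝ) ^ ((n : ℤ) - m) = (p : ℝ) ^ n := by
      rw [zpow_natCast_sub_natCast₀ (Nat.cast_ne_zero.2 (NeZero.ne p)),
        mul_div_cancel₀ _ (pow_natCast_pos p m).ne']
    rw [sum_norm_sq_walsh_ne_zero, ZMod.card_filter_ne_zero (R := ℝ), Complex.norm_real,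
      Real.norm_eq_abs, sq_abs, hc, ← hpow, ← mul_sub, div_pow, mul_pow, h]
    field_simp
  intro b hb
  exact eq_of_sum_eq_card_smul_of_sum_norm_sq_eq hsum hnorm b (mem_filter.2 ⟨mem_univ b, hb⟩)

theorem exists_int_eq_and_pow_dvd_of_walsh_eq_const (hF : Function.Surjective F)
    (hq : 1 < p ^ m) {c : ℝ} (hc : ∀ b ≠ 0, walsh p n m F b 0 = c) :
    ∃ W : ℤ, c = W ∧ (p : ℤ) ^ m ∣ W := by
  have : Nontrivial (Fin m → ZMod p) := by
    rw [← Fintype.one_lt_card_iff_nontrivial]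
    simpa [ZMod.card] using hq
  obtain ⟨β, hβ⟩ := exists_ne (0 : Fin m → ZMod p)
  have hp : 1 < p := lt_of_pow_lt_pow_left₀ m (Nat.zero_le p) (by simpa using hq)
  refine ⟨p ^ n - p ^ m * fiberCard p n m F β, ?_,
    dvd_sub (pow_dvd_pow _ (ZMod.le_of_surjective_pi hp hF)) (dvd_mul_right _ _)⟩
  push_cast
  linarith [fiberCard_mul_of_walsh_eq_const F hc hβ]

end Walsh

theorem almostBalanced_surjective_walsh_general (p n m : ℕ) [NeZero p]
    (F : (Fin n → ZMod p) → (Fin m → ZMod p))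
    (hsurj : Function.Surjective F)
    (hxi : xi p n m F ≠ 0)
    (h0 : (fiberCard p n m F 0 : ℝ)
            = (p : ℝ) ^ ((n : ℤ) - (m : ℤ))
              + Real.sqrt ((1 - ((p : ℝ) ^ m)⁻¹) * imbalance p n m F) ∨
          (fiberCard p n m F 0 : ℝ)
            = (p : ℝ) ^ ((n : ℤ) - (m : ℤ))
              - Real.sqrt ((1 - ((p : ℝ) ^ m)⁻¹) * imbalance p n m F)) :
    ∃ W : ℤ, W ≠ 0 ∧
      (∀ b : Fin m → ZMod p, b ≠ 0 → walsh p n m F b 0 = (W : ℂ)) ∧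
      ((p : ℤ) ^ m ∣ W) ∧
      imbalance p n m F = (((p : ℝ) ^ m - 1) / (p : ℝ) ^ m) * (W : ℝ) ^ 2 ∧
      (fiberCard p n m F 0 : ℝ)
        = (p : ℝ) ^ ((n : ℤ) - (m : ℤ)) + (((p : ℝ) ^ m - 1) / (p : ℝ) ^ m) * (W : ℝ) ∧
      ∀ β : Fin m → ZMod p, β ≠ 0 →
        (fiberCard p n m F β : ℝ)
          = (p : ℝ) ^ ((n : ℤ) - (m : ℤ)) - (W : ℝ) / (p : ℝ) ^ m := by
  obtain ⟨hq, hNb⟩ := one_lt_pow_and_imbalance_pos_of_xi_ne_zero F hsurj hxi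
  have hsq : ((fiberCard p n m F 0 : ℝ) - (p : ℝ) ^ ((n : ℤ) - m)) ^ 2
      = (1 - ((p : ℝ) ^ m)⁻¹) * imbalance p n m F := by
    have hD := (mul_pos (sub_pos.2 (inv_lt_one_of_one_lt₀ hq)) hNb).le
    rcases h0 with h | h <;> simp [h, Real.sq_sqrt hD]
  have hconst := walsh_eq_of_sq_sub_fiberCard_zero F hq hsq
  obtain ⟨W, hcW, hdvd⟩ :=
    exists_int_eq_and_pow_dvd_of_walsh_eq_const F hsurj (by exact_mod_cast hq) hconst
  rw [hcW] at hconst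
  have himb := imbalance_of_walsh_eq_const F hconst
  have hp : (p : ℝ) ≠ 0 := Nat.cast_ne_zero.2 (NeZero.ne p)
  refine ⟨W, ?_, fun b hb => by rw [hconst b hb, Complex.ofReal_intCast], hdvd, himb, ?_,
    fun β hβ => ?_⟩
  · rintro rfl
    simp [himb] at hNb
  · rw [eq_zpow_sub_add_div_of_pow_mul_eq hp (fiberCard_zero_mul_of_walsh_eq_const F hconst),
      mul_div_right_comm]
  · rw [eq_zpow_sub_add_div_of_pow_mul_eq hp
      ((fiberCard_mul_of_walsh_eq_const F hconst hβ).trans (sub_eq_add_neg _ _)), neg_div,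
      ← sub_eq_add_neg]

theorem almostBalanced_surjective_walsh (p n m : ℕ) [NeZero p] (hp : p.Prime)
    (hn : 0 < n) (hm : 0 < m)
    (F : (Fin n → ZMod p) → (Fin m → ZMod p))
    (hsurj : Function.Surjective F)
    (hxi : xi p n m F ≠ 0)
    (h0 : (fiberCard p n m F 0 : ℝ)
            = (p : ℝ) ^ ((n : ℤ) - (m : ℤ))
              + Real.sqrt ((1 - ((p : ℝ) ^ m)⁻¹) * imbalance p n m F) ∨
          (fiberCard p n m F 0 : ℝ)
            = (p : ℝ) ^ ((n : ℤ) - (m : ℤ))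
              - Real.sqrt ((1 - ((p : ℝ) ^ m)⁻¹) * imbalance p n m F)) :
    ∃ W : ℤ, W ≠ 0 ∧
      (∀ b : Fin m → ZMod p, b ≠ 0 → walsh p n m F b 0 = (W : ℂ)) ∧
      ((p : ℤ) ^ m ∣ W) ∧
      imbalance p n m F = (((p : ℝ) ^ m - 1) / (p : ℝ) ^ m) * (W : ℝ) ^ 2 ∧
      (fiberCard p n m F 0 : ℝ)
        = (p : ℝ) ^ ((n : ℤ) - (m : ℤ)) + (((p : ℝ) ^ m - 1) / (p : ℝ) ^ m) * (W : ℝ) ∧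
      ∀ β : Fin m → ZMod p, β ≠ 0 →
        (fiberCard p n m F β : ℝ)
          = (p : ℝ) ^ ((n : ℤ) - (m : ℤ)) - (W : ℝ) / (p : ℝ) ^ m :=
  almostBalanced_surjective_walsh_general p n m F hsurj hxi h0
end
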